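/- Let G be a locally finite connected graph having the finite-step retaining property of degree d. Then either G has the containment property of degree d, or G has at least two ends; more precisely, in the latter case there is a finite set W of vertices such that G \ W has at least two unbounded connected components. -/

import Mathlib

/-- The growth comparison relation: `f ≼ g` iff there is `C > 0` with
`f n ≤ C * g (C*n + C) + C` for all `n`. -/
def GrowthLE (f g : ℕ → ℕ) : Prop :=
  ∃ C : ℕ, 0 < C ∧ ∀ n, f n ≤ C * g (C * n + C) + C

/-- Equivalence of growth rates. -/
def GrowthEquiv (f g : ℕ → ℕ) : Prop := GrowthLE f g ∧ GrowthLE g f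

/-- The growth function of a subset `U` of a metric space, with basepoint set `A`:
`n ↦ #(U ∩ B(A, n))`. -/
noncomputable def relGrowth {X : Type*} [MetricSpace X] (U A : Set X) : ℕ → ℕ :=
  fun n => Set.ncard {x | x ∈ U ∧ ∃ a ∈ A, dist a x ≤ (n : ℝ)}

/-- A metric space is discrete and proper iff all balls (of integer radius) are finite. -/
def DiscreteProper (X : Type*) [MetricSpace X] : Prop :=
  ∀ (x : X) (n : ℕ), {y : X | dist x y ≤ (n : ℝ)}.Finite

/-- Uniformly proper: there is a uniform bound on cardinalities of all balls of radius `n`. -/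
def UniformlyProper (X : Type*) [MetricSpace X] : Prop :=
  ∃ g : ℕ → ℕ, ∀ (x : X) (n : ℕ),
    {y : X | dist x y ≤ (n : ℝ)}.Finite ∧ Set.ncard {y : X | dist x y ≤ (n : ℝ)} ≤ g n

/-- A `c`-quasi-isometry between metric spaces. -/
def IsQuasiIsometryMS {X Y : Type*} [MetricSpace X] [MetricSpace Y] (c : ℝ) (φ : X → Y) : Prop :=
  1 ≤ c ∧
  (∀ a b : X, dist a b / c - c ≤ dist (φ a) (φ b) ∧ dist (φ a) (φ b) ≤ c * dist a b + c) ∧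
  (∀ y : Y, ∃ x : X, dist (φ x) y ≤ c)

/-- Growth function of `U ⊆ V(G)` (with the metric induced by the path-metric of `G`)
with respect to basepoint set `A`. -/
noncomputable def graphGrowth {V : Type*} (G : SimpleGraph V) (U A : Set V) : ℕ → ℕ :=
  fun n => Set.ncard {v | v ∈ U ∧ ∃ a ∈ A, G.dist a v ≤ n}

/-- `Growth(U) = Growth(G)` for `U` a set of vertices of `G` with the induced metric. -/
def GrowthEqFull {V : Type*} (G : SimpleGraph V) (U : Set V) : Prop :=
  ∃ u₀ ∈ U, GrowthEquiv (graphGrowth G Set.univ {u₀}) (graphGrowth G U {u₀})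

/-- The set of vertices protected up to (and including) time `n`. -/
def protectedUpTo {V : Type*} (W : ℕ → Set V) (n : ℕ) : Set V :=
  ⋃ i ∈ Finset.Icc 1 n, W i

/-- The set of vertices on fire at time `n`, for fire reach `r`, strategy `W` and
initial fire `X0`: `X (n+1)` consists of vertices joined to `X n` by a path of length
at most `r` avoiding `(W 1 ∪ ⋯ ∪ W (n+1)) \ X n`. -/
def fireSet {V : Type*} (G : SimpleGraph V) (r : ℕ) (W : ℕ → Set V) (X0 : Set V) : ℕ → Set V
  | 0 => X0
  | n + 1 =>
    {v | ∃ u ∈ fireSet G r W X0 n, ∃ p : G.Walk u v, p.length ≤ r ∧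
      ∀ x ∈ p.support, x ∉ protectedUpTo W (n + 1) \ fireSet G r W X0 n}

/-- The set of vertices on fire at the end of the game. -/
def burnedSet {V : Type*} (G : SimpleGraph V) (r : ℕ) (W : ℕ → Set V) (X0 : Set V) : Set V :=
  ⋃ n, fireSet G r W X0 n

/-- An `{f n}`-strategy: at each time `n ≥ 1` at most `f n` vertices are protected. -/
def IsStrategyBound {V : Type*} (f : ℕ → ℕ) (W : ℕ → Set V) : Prop :=
  ∀ n, 1 ≤ n → (W n).Finite ∧ (W n).ncard ≤ f n

/-- A finite-step strategy protects no vertices after some finite time. -/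
def FiniteStepStrategy {V : Type*} (W : ℕ → Set V) : Prop :=
  ∃ N, ∀ n, N ≤ n → W n = ∅

/-- A retaining `({f n}, r)`-strategy for the initial fire `X0`. -/
def IsRetainingStrategy {V : Type*} (G : SimpleGraph V) (f : ℕ → ℕ) (r : ℕ)
    (X0 : Set V) (W : ℕ → Set V) : Prop :=
  IsStrategyBound f W ∧ GrowthEqFull G (burnedSet G r W X0)ᶜ

/-- The `({f n}, r)`-retaining property. -/
def RetainingProperty {V : Type*} (G : SimpleGraph V) (f : ℕ → ℕ) (r : ℕ) : Prop :=
  ∀ X0 : Set V, X0.Finite → ∃ W, IsRetainingStrategy G f r X0 W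

/-- Polynomial retaining property of degree `d` (fire reach one). -/
def PolyRetaining {V : Type*} (G : SimpleGraph V) (d : ℕ) : Prop :=
  ∃ K : ℕ, 0 < K ∧ RetainingProperty G (fun n => K * n ^ d) 1

/-- The finite-step `{f n}`-retaining property (fire reach one). -/
def FiniteStepRetainingProperty {V : Type*} (G : SimpleGraph V) (f : ℕ → ℕ) : Prop :=
  ∀ X0 : Set V, X0.Finite → ∃ W, IsRetainingStrategy G f 1 X0 W ∧ FiniteStepStrategy W

/-- The finite-step polynomial retaining property of degree `d`. -/
def FiniteStepPolyRetaining {V : Type*} (G : SimpleGraph V) (d : ℕ) : Prop :=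
  ∃ K : ℕ, 0 < K ∧ FiniteStepRetainingProperty G (fun n => K * n ^ d)

/-- The `({f n}, r)`-containment property. -/
def ContainmentProperty {V : Type*} (G : SimpleGraph V) (f : ℕ → ℕ) (r : ℕ) : Prop :=
  ∀ X0 : Set V, X0.Finite →
    ∃ W, IsStrategyBound f W ∧ (burnedSet G r W X0).Finite

/-- Polynomial containment property of degree `d` (fire reach one). -/
def PolyContainment {V : Type*} (G : SimpleGraph V) (d : ℕ) : Prop :=
  ∃ K : ℕ, 0 < K ∧ ContainmentProperty G (fun n => K * n ^ d) 1

/-- The constant containment property. -/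
def ConstantContainment {V : Type*} (G : SimpleGraph V) : Prop := PolyContainment G 0

/-- `D` is (the vertex set of) a connected component of `G \ K`. -/
def ComponentAvoiding {V : Type*} (G : SimpleGraph V) (K D : Set V) : Prop :=
  D.Nonempty ∧ D ⊆ Kᶜ ∧
  (∀ u ∈ D, ∀ v ∈ D, ∃ p : G.Walk u v, ∀ x ∈ p.support, x ∉ K) ∧
  (∀ u ∈ D, ∀ v : V, v ∉ K → (∃ p : G.Walk u v, ∀ x ∈ p.support, x ∉ K) → v ∈ D)

/-- A deep component of `G \ K`: not contained in any bounded neighborhood of `K`. -/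
def IsDeepComponent {V : Type*} (G : SimpleGraph V) (K D : Set V) : Prop :=
  ComponentAvoiding G K D ∧ ∀ r : ℕ, ¬ D ⊆ {v | ∃ k ∈ K, G.dist k v ≤ r}

/-- An unbounded component of `G \ K`. -/
def IsUnboundedComponent {V : Type*} (G : SimpleGraph V) (K D : Set V) : Prop :=
  ComponentAvoiding G K D ∧ ∀ (v : V) (r : ℕ), ¬ D ⊆ {u | G.dist v u ≤ r}

/-- Uniformly locally finite graph: vertex degrees are bounded. -/
def UnifLocFinite {V : Type*} (G : SimpleGraph V) : Prop :=
  ∃ M : ℕ, ∀ v : V, (G.neighborSet v).Finite ∧ (G.neighborSet v).ncard ≤ M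

/-- Locally finite graph. -/
def LocFinite {V : Type*} (G : SimpleGraph V) : Prop := ∀ v : V, (G.neighborSet v).Finite

/-- A `c`-quasi-isometry between two connected graphs (with their path-metrics). -/
def GraphQI {V V' : Type*} (c : ℝ) (G : SimpleGraph V) (H : SimpleGraph V') (φ : V → V') : Prop :=
  1 ≤ c ∧
  (∀ a b : V, (G.dist a b : ℝ) / c - c ≤ (H.dist (φ a) (φ b) : ℝ) ∧
    (H.dist (φ a) (φ b) : ℝ) ≤ c * (G.dist a b : ℝ) + c) ∧
  (∀ y : V', ∃ x : V, (H.dist (φ x) y : ℝ) ≤ c)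

/-- The Cayley graph of a group with respect to a set `S`. -/
def cayley (G : Type) [Group G] (S : Set G) : SimpleGraph G :=
  SimpleGraph.fromRel (fun a b => a⁻¹ * b ∈ S)

/-- `S` is a finite generating set. -/
def IsFiniteGenSet {G : Type} [Group G] (S : Set G) : Prop :=
  S.Finite ∧ Subgroup.closure S = ⊤

/-- The ball of radius `n` around the identity for the word metric w.r.t. `T`. -/
def wordBall {G : Type} [Group G] (T : Set G) (n : ℕ) : Set G :=
  {g | ∃ l : List G, (∀ x ∈ l, x ∈ T ∨ x⁻¹ ∈ T) ∧ l.length ≤ n ∧ l.prod = g}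

/-- The word metric w.r.t. `T`. -/
noncomputable def wordDist {G : Type} [Group G] (T : Set G) (x y : G) : ℕ :=
  sInf {n | x⁻¹ * y ∈ wordBall T n}

/-- `G` is an amalgamated product `A ∗_C B` with `C` a proper subgroup of both factors,
where `C` corresponds to the given subgroup. -/
def SplitsOverAmalgam (G : Type) [Group G] (C : Subgroup G) : Prop :=
  ∃ (Gi : Bool → Type) (_ : ∀ i, Group (Gi i)) (K : Type) (_ : Group K)
    (φ : ∀ i, K →* Gi i),
    (∀ i, Function.Injective (φ i)) ∧ (∀ i, ¬ Function.Surjective (φ i)) ∧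
    ∃ e : G ≃* Monoid.PushoutI φ,
      C = Subgroup.comap e.toMonoidHom (Monoid.PushoutI.base φ).range

/-- `G` is an HNN-extension over the given subgroup `C`. -/
def SplitsOverHNN (G : Type) [Group G] (C : Subgroup G) : Prop :=
  ∃ (H : Type) (_ : Group H) (A B : Subgroup H) (φ : A ≃* B)
    (e : G ≃* HNNExtension H A B φ),
    C = Subgroup.comap e.toMonoidHom
      (Subgroup.map (HNNExtension.of : H →* HNNExtension H A B φ) A)

/-- `G` splits over `C`: amalgamated product with `C` proper in both factors,
or HNN-extension over `C`. -/
def SplitsOver (G : Type) [Group G] (C : Subgroup G) : Prop :=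
  SplitsOverAmalgam G C ∨ SplitsOverHNN G C

/-- Amenability of a (discrete) group: existence of a left-invariant, finitely
additive probability measure defined on all subsets. -/
def IsAmenable (G : Type) [Group G] : Prop :=
  ∃ m : Set G → ℝ, (∀ A : Set G, 0 ≤ m A) ∧ m Set.univ = 1 ∧
    (∀ A B : Set G, Disjoint A B → m (A ∪ B) = m A + m B) ∧
    (∀ (g : G) (A : Set G), m ((g * ·) '' A) = m A)


/-!
Suppose containment of degree `d` fails: some finite fire `X0` burns infinitely many vertices
against every `{K n^d}`-strategy, in particular against a finite-step retaining strategy `W`.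
Once `W` stops, the fire spreads freely through `G \ P`, where `P` is the finite set of protected
vertices, so every component of `G \ P` is either entirely burned or entirely unburned. The burned
set is infinite, and so is the unburned set, since its growth dominates that of the infinite,
locally finite graph `G`. As `G \ P` has only finitely many components, one of them contains
infinitely many burned vertices and another infinitely many unburned ones; infinite components of
a locally finite graph are unbounded.
-/

open SimpleGraph

section Firefighter

variable {V : Type*} {G : SimpleGraph V}

section Fire

variable {r : ℕ} {W : ℕ → Set V} {X0 : Set V} {N : ℕ}

lemma fireSet_subset_succ (n : ℕ) : fireSet G r W X0 n ⊆ fireSet G r W X0 (n + 1) :=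
  fun v hv => ⟨v, hv, Walk.nil, Nat.zero_le r, by simp [hv]⟩

lemma fireSet_mono : Monotone (fireSet G r W X0) :=
  monotone_nat_of_le_succ fireSet_subset_succ

lemma protectedUpTo_eq_of_le (hN : ∀ n, N ≤ n → W n = ∅) {m : ℕ} (hm : N ≤ m) :
    protectedUpTo W m = protectedUpTo W N := by
  ext x
  simp only [protectedUpTo, Set.mem_iUnion, Finset.mem_Icc, exists_prop]
  constructor
  · rintro ⟨i, ⟨hi1, -⟩, hx⟩
    rcases lt_or_ge i N with hiN | hiN
    · exact ⟨i, ⟨hi1, hiN.le⟩, hx⟩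
    · simp [hN i hiN] at hx
  · rintro ⟨i, ⟨hi1, hiN⟩, hx⟩
    exact ⟨i, ⟨hi1, hiN.trans hm⟩, hx⟩

lemma protectedUpTo_finite (hW : ∀ n, 1 ≤ n → (W n).Finite) (N : ℕ) :
    (protectedUpTo W N).Finite :=
  (Finset.Icc 1 N).finite_toSet.biUnion fun i hi => hW i (Finset.mem_Icc.mp hi).1

lemma mem_burnedSet_of_adj (hr : 1 ≤ r) (hN : ∀ n, N ≤ n → W n = ∅) {u v : V}
    (hu : u ∈ burnedSet G r W X0) (hv : v ∉ protectedUpTo W N) (huv : G.Adj u v) :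
    v ∈ burnedSet G r W X0 := by
  obtain ⟨n, hun⟩ := Set.mem_iUnion.mp hu
  have hum : u ∈ fireSet G r W X0 (max n N) := fireSet_mono (le_max_left n N) hun
  refine Set.mem_iUnion.mpr ⟨max n N + 1, u, hum, Walk.cons huv Walk.nil, by simpa using hr, ?_⟩
  rw [protectedUpTo_eq_of_le hN (by omega)]
  simp only [Walk.support_cons, Walk.support_nil, List.mem_cons, List.not_mem_nil, or_false]
  rintro x (rfl | rfl) ⟨hxP, hxF⟩
  exacts [hxF hum, hv hxP]

lemma mem_burnedSet_of_walk (hr : 1 ≤ r) (hN : ∀ n, N ≤ n → W n = ∅) {u v : V}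
    (p : G.Walk u v) (hp : ∀ x ∈ p.support, x ∉ protectedUpTo W N)
    (hu : u ∈ burnedSet G r W X0) : v ∈ burnedSet G r W X0 := by
  induction p with
  | nil => exact hu
  | cons huv q ih =>
    simp only [Walk.support_cons, List.mem_cons, forall_eq_or_imp] at hp
    exact ih hp.2 (mem_burnedSet_of_adj hr hN hu (hp.2 _ q.start_mem_support) huv)

end Fire

section Components

variable {P : Set V}

/-- The component of `v` in `G \ P`; empty when `v ∈ P`. -/
def componentOutside (G : SimpleGraph V) (P : Set V) (v : V) : Set V :=
  {w | ∃ p : G.Walk v w, ∀ x ∈ p.support, x ∉ P}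

lemma notMem_of_mem_componentOutside {v w : V} (hw : w ∈ componentOutside G P v) : w ∉ P :=
  let ⟨p, hp⟩ := hw; hp w p.end_mem_support

lemma mem_componentOutside_self {v : V} (hv : v ∉ P) : v ∈ componentOutside G P v :=
  ⟨Walk.nil, by simpa using hv⟩

lemma componentOutside_symm {u v : V} (hv : v ∈ componentOutside G P u) :
    u ∈ componentOutside G P v :=
  let ⟨p, hp⟩ := hv
  ⟨p.reverse, fun x hx => hp x (by simpa using hx)⟩

lemma componentOutside_trans {u v w : V} (hv : v ∈ componentOutside G P u)
    (hw : w ∈ componentOutside G P v) : w ∈ componentOutside G P u :=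
  let ⟨p, hp⟩ := hv
  let ⟨q, hq⟩ := hw
  ⟨p.append q, fun x hx => (Walk.mem_support_append_iff p q).mp hx |>.elim (hp x) (hq x)⟩

lemma componentOutside_eq_of_mem {u v : V} (hv : v ∈ componentOutside G P u) :
    componentOutside G P v = componentOutside G P u :=
  Set.ext fun _ =>
    ⟨componentOutside_trans hv, componentOutside_trans (componentOutside_symm hv)⟩

lemma componentAvoiding_componentOutside {v : V} (hv : v ∉ P) :
    ComponentAvoiding G P (componentOutside G P v) :=
  ⟨⟨v, mem_componentOutside_self hv⟩, fun _ => notMem_of_mem_componentOutside,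
    fun _ ha _ hb => componentOutside_trans (componentOutside_symm ha) hb,
    fun _ ha _ _ hav => componentOutside_trans ha hav⟩

lemma walk_avoids_or_exists_adj_mem_componentOutside {u v : V} (q : G.Walk v u)
    (hv : v ∉ P) : (∀ x ∈ q.support, x ∉ P) ∨
      ∃ w ∈ componentOutside G P v, ∃ z ∈ P, G.Adj z w := by
  induction q with
  | nil => exact Or.inl (by simpa using hv)
  | @cons a b c hab q ih =>
    by_cases hb : b ∈ P
    · exact Or.inr ⟨a, mem_componentOutside_self hv, b, hb, hab.symm⟩
    have hba : b ∈ componentOutside G P a :=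
      ⟨Walk.cons hab Walk.nil, by simp [hv, hb]⟩
    rcases ih hb with hq | ⟨w, hw, z, hz, hzw⟩
    · exact Or.inl (by simpa [hv] using hq)
    · exact Or.inr ⟨w, componentOutside_trans hba hw, z, hz, hzw⟩

/-- Each component of `G \ P` contains a fixed base vertex or a neighbour of `P`. -/
lemma finite_componentOutside_image (hG : G.Connected) (hlf : LocFinite G) (hP : P.Finite) :
    (componentOutside G P '' Pᶜ).Finite := by
  obtain ⟨v₀⟩ := hG.nonempty
  refine (((hP.biUnion fun z _ => hlf z).insert v₀).image (componentOutside G P)).subset ?_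
  rintro _ ⟨v, hv, rfl⟩
  obtain ⟨q⟩ := hG.preconnected v v₀
  rcases walk_avoids_or_exists_adj_mem_componentOutside q hv with hq | ⟨w, hw, z, hz, hzw⟩
  · exact ⟨v₀, Set.mem_insert _ _, componentOutside_eq_of_mem ⟨q, hq⟩⟩
  · exact ⟨w, Set.mem_insert_of_mem _ (Set.mem_biUnion hz hzw), componentOutside_eq_of_mem hw⟩

lemma exists_infinite_componentOutside_inter (hG : G.Connected) (hlf : LocFinite G)
    (hP : P.Finite) {A : Set V} (hA : A.Infinite) :
    ∃ v ∉ P, (componentOutside G P v ∩ A).Infinite := by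
  by_contra! hfin
  have hcover : A \ P ⊆ ⋃ D ∈ componentOutside G P '' Pᶜ, D ∩ A := fun a ha =>
    Set.mem_biUnion ⟨a, ha.2, rfl⟩ ⟨mem_componentOutside_self ha.2, ha.1⟩
  refine hA.sdiff hP (((finite_componentOutside_image hG hlf hP).biUnion ?_).subset hcover)
  rintro _ ⟨v, hv, rfl⟩
  exact hfin v hv

end Components

lemma finite_setOf_walk_length_le (hlf : LocFinite G) (v : V) (r : ℕ) :
    {u | ∃ p : G.Walk u v, p.length ≤ r}.Finite := by
  induction r with
  | zero =>
    refine (Set.finite_singleton v).subset ?_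
    rintro u ⟨p, hp⟩
    exact Walk.eq_of_length_eq_zero (Nat.le_zero.mp hp)
  | succ r ih =>
    refine (ih.union (ih.biUnion fun w _ => hlf w)).subset ?_
    rintro u ⟨p, hp⟩
    cases p with
    | nil => exact Or.inl ⟨Walk.nil, Nat.zero_le r⟩
    | cons huw q => exact Or.inr (Set.mem_biUnion ⟨q, by simpa using hp⟩ huw.symm)

lemma finite_setOf_dist_le (hG : G.Preconnected) (hlf : LocFinite G) (v : V) (r : ℕ) :
    {u | G.dist v u ≤ r}.Finite := by
  refine (finite_setOf_walk_length_le hlf v r).subset fun u hu => ?_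
  obtain ⟨p, hp⟩ := (hG u v).exists_walk_length_eq_dist
  exact ⟨p, by rwa [hp, dist_comm]⟩

lemma isUnboundedComponent_of_infinite (hG : G.Preconnected) (hlf : LocFinite G) {K D : Set V}
    (hD : ComponentAvoiding G K D) (hinf : D.Infinite) : IsUnboundedComponent G K D :=
  ⟨hD, fun v r hsub => hinf ((finite_setOf_dist_le hG hlf v r).subset hsub)⟩

/-- `ncard` of an infinite set is `0`, so the finiteness of balls is essential here. -/
lemma exists_lt_graphGrowth_univ (hG : G.Preconnected) (hlf : LocFinite G)
    (hV : (Set.univ : Set V).Infinite) (u₀ : V) (M : ℕ) :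
    ∃ n, M < graphGrowth G Set.univ {u₀} n := by
  obtain ⟨T, -, hT, hTcard⟩ := hV.exists_subset_ncard_eq (M + 1)
  set R := hT.toFinset.sup (G.dist u₀)
  refine ⟨R, ?_⟩
  have hball : {v | v ∈ Set.univ ∧ ∃ a ∈ ({u₀} : Set V), G.dist a v ≤ R} =
      {v | G.dist u₀ v ≤ R} := by
    simp
  rw [graphGrowth, hball, Nat.lt_iff_add_one_le, ← hTcard]
  exact Set.ncard_le_ncard (fun t ht => Finset.le_sup (f := G.dist u₀) (hT.mem_toFinset.mpr ht))
    (finite_setOf_dist_le hG hlf u₀ R)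

lemma infinite_of_growthLE_graphGrowth {f : ℕ → ℕ} (hf : ∀ M, ∃ n, M < f n) {U A : Set V}
    (h : GrowthLE f (graphGrowth G U A)) : U.Infinite := by
  intro hU
  obtain ⟨C, -, hle⟩ := h
  obtain ⟨n, hn⟩ := hf (C * U.ncard + C)
  have hgrowth : graphGrowth G U A (C * n + C) ≤ U.ncard :=
    Set.ncard_le_ncard (fun _ hx => hx.1) hU
  have := hle n
  have := Nat.mul_le_mul_left C hgrowth
  omega

end Firefighter

theorem stmt12 {V : Type*} (G : SimpleGraph V) (hG : G.Connected) (hlf : LocFinite G)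
    (d : ℕ) (h : FiniteStepPolyRetaining G d) :
    PolyContainment G d ∨
    ∃ W : Set V, W.Finite ∧ ∃ D₁ D₂ : Set V,
      IsUnboundedComponent G W D₁ ∧ IsUnboundedComponent G W D₂ ∧ D₁ ≠ D₂ := by
  obtain ⟨K, hK, hret⟩ := h
  by_cases hcont : ContainmentProperty G (fun n => K * n ^ d) 1
  · exact Or.inl ⟨K, hK, hcont⟩
  right
  obtain ⟨X0, hX0, hburn⟩ : ∃ X0 : Set V, X0.Finite ∧
      ∀ W, IsStrategyBound (fun n => K * n ^ d) W → (burnedSet G 1 W X0).Infinite := by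
    simpa [ContainmentProperty] using hcont
  obtain ⟨W, ⟨hWb, u₀, -, hgrowth, -⟩, N, hN⟩ := hret X0 hX0
  set B := burnedSet G 1 W X0
  have hB : B.Infinite := hburn W hWb
  have hU : Bᶜ.Infinite := infinite_of_growthLE_graphGrowth
    (exists_lt_graphGrowth_univ hG.preconnected hlf (hB.mono (Set.subset_univ _)) u₀) hgrowth
  have hP := protectedUpTo_finite (fun n hn => (hWb n hn).1) N
  obtain ⟨w₁, hw₁, hinf₁⟩ := exists_infinite_componentOutside_inter hG hlf hP hB
  obtain ⟨w₂, hw₂, hinf₂⟩ := exists_infinite_componentOutside_inter hG hlf hP hU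
  obtain ⟨b₁, hb₁, hb₁B⟩ := hinf₁.nonempty
  obtain ⟨b₂, hb₂, hb₂B⟩ := hinf₂.nonempty
  refine ⟨_, hP, _, _,
    isUnboundedComponent_of_infinite hG.preconnected hlf (componentAvoiding_componentOutside hw₁)
      (hinf₁.mono Set.inter_subset_left),
    isUnboundedComponent_of_infinite hG.preconnected hlf (componentAvoiding_componentOutside hw₂)
      (hinf₂.mono Set.inter_subset_left), fun hD => ?_⟩
  obtain ⟨p, hp⟩ := componentOutside_trans (componentOutside_symm hb₁) (hD ▸ hb₂)
  exact hb₂B (mem_burnedSet_of_walk le_rfl hN p hp hb₁B)
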